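/- Let C ⊆ H be nonempty and closed, and let {T_k}_{k=0}^∞ be nonexpansive operators on H with C ⊆ ⋂_k Fix T_k. Assume that for each y ∈ H and each q ∈ ℕ, the sequence {T_{q+k} ⋯ T_{q+1} T_q (y)}_{k=0}^∞ converges in norm to an element of C. Let {γ_k} ⊆ [0,∞) with Σ_k γ_k < ∞, and let {y^k} ⊆ H satisfy ‖y^{k+1} - T_k(y^k)‖ ≤ γ_k for all k. Then {y^k} converges in norm to an element of C. -/
import Mathlib


open Filter

/-- `iterComp T q k = T_{q+k} ∘ ⋯ ∘ T_{q+1} ∘ T_q`. -/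
def iterComp {H : Type*} (T : ℕ → H → H) (q : ℕ) : ℕ → H → H
  | 0 => T q
  | k + 1 => fun y => T (q + k + 1) (iterComp T q k y)

/-- Convergence of inexact iterates with summable errors (Butnariu–Reich–Zaslavski). -/
theorem inexact_iterates_converge
    {H : Type*} [NormedAddCommGroup H] [InnerProductSpace ℝ H] [CompleteSpace H]
    (C : Set H) (hCne : C.Nonempty) (hCc : IsClosed C)
    (T : ℕ → H → H)
    (hTne : ∀ k, ∀ x y : H, ‖T k x - T k y‖ ≤ ‖x - y‖)
    (hfix : ∀ k, ∀ c ∈ C, T k c = c)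
    (hconv : ∀ (y : H) (q : ℕ), ∃ c ∈ C,
      Tendsto (fun k => iterComp T q k y) atTop (nhds c))
    (γ : ℕ → ℝ) (hγ : ∀ k, 0 ≤ γ k) (hγs : Summable γ)
    (y : ℕ → H) (hy : ∀ k, ‖y (k + 1) - T k (y k)‖ ≤ γ k) :
    ∃ c ∈ C, Tendsto y atTop (nhds c) := by
  classical
  -- tail sums
  set S : ℕ → ℝ := fun q => ∑' j, γ (q + j) with hS
  have hSnn : ∀ q, 0 ≤ S q := fun q =>
    tsum_nonneg (fun j => hγ _)
  have hS0 : Tendsto S atTop (nhds 0) :=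
    (tendsto_sum_nat_add γ).congr fun q => tsum_congr fun j => by rw [Nat.add_comm]
  -- key inductive estimate
  have key : ∀ q k, ‖y (q + k + 1) - iterComp T q k (y q)‖ ≤
      ∑ j ∈ Finset.range (k + 1), γ (q + j) := by
    intro q k
    induction k with
    | zero => simpa [iterComp] using hy q
    | succ k ih =>
      have h1 : ‖y (q + (k + 1) + 1) - T (q + k + 1) (y (q + k + 1))‖ ≤ γ (q + k + 1) := by
        simpa [Nat.add_assoc, Nat.add_comm, Nat.add_left_comm] using hy (q + k + 1)
      have h2 : ‖T (q + k + 1) (y (q + k + 1)) - T (q + k + 1) (iterComp T q k (y q))‖ ≤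
          ‖y (q + k + 1) - iterComp T q k (y q)‖ := hTne _ _ _
      calc ‖y (q + (k + 1) + 1) - iterComp T q (k + 1) (y q)‖
          ≤ ‖y (q + (k + 1) + 1) - T (q + k + 1) (y (q + k + 1))‖ +
            ‖T (q + k + 1) (y (q + k + 1)) - T (q + k + 1) (iterComp T q k (y q))‖ := by
            simpa [iterComp] using norm_sub_le_norm_sub_add_norm_sub
              (y (q + (k + 1) + 1)) (T (q + k + 1) (y (q + k + 1)))
              (iterComp T q (k + 1) (y q))
        _ ≤ γ (q + k + 1) + ‖y (q + k + 1) - iterComp T q k (y q)‖ := add_le_add h1 h2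
        _ ≤ γ (q + k + 1) + ∑ j ∈ Finset.range (k + 1), γ (q + j) := by linarith
        _ = ∑ j ∈ Finset.range (k + 2), γ (q + j) := by
            conv_rhs => rw [Finset.sum_range_succ]
            rw [add_comm]
            rfl
  -- sum bounded by tail tsum
  have hsum_le : ∀ q k, ∑ j ∈ Finset.range (k + 1), γ (q + j) ≤ S q := by
    intro q k
    have hsum : Summable fun j => γ (q + j) := by
      simpa [Nat.add_comm] using (summable_nat_add_iff q).mpr hγs
    exact Summable.sum_le_tsum (f := fun j => γ (q + j)) (Finset.range (k + 1))
      (fun i _ => hγ _) hsum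
  have keyS : ∀ q k, ‖y (q + k + 1) - iterComp T q k (y q)‖ ≤ S q :=
    fun q k => (key q k).trans (hsum_le q k)
  -- the exact-sequence limits
  choose c hcC hc using fun q => hconv (y q) q
  -- y is Cauchy
  have hcauchy : CauchySeq y := by
    rw [Metric.cauchySeq_iff']
    intro ε hε
    have h4 : (0:ℝ) < ε / 4 := by linarith
    obtain ⟨q, hq⟩ := (hS0.eventually (gt_mem_nhds h4)).exists
    obtain ⟨K, hK⟩ := (Metric.tendsto_atTop.mp (hc q)) (ε / 4) h4
    refine ⟨q + K + 1, fun n hn => ?_⟩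
    have hbound : ∀ m, q + K + 1 ≤ m → dist (y m) (c q) < ε / 2 := by
      intro m hm
      obtain ⟨k, hk, rfl⟩ : ∃ k, K ≤ k ∧ m = q + k + 1 := by
        refine ⟨m - q - 1, by omega, by omega⟩
      have h1 := keyS q k
      have h2 := hK k hk
      rw [dist_eq_norm] at h2 ⊢
      calc ‖y (q + k + 1) - c q‖ ≤ ‖y (q + k + 1) - iterComp T q k (y q)‖ +
            ‖iterComp T q k (y q) - c q‖ := norm_sub_le_norm_sub_add_norm_sub _ _ _
        _ < ε / 2 := by linarith
    calc dist (y n) (y (q + K + 1)) ≤ dist (y n) (c q) + dist (c q) (y (q + K + 1)) :=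
          dist_triangle _ _ _
      _ < ε / 2 + ε / 2 := by
          have := hbound (q + K + 1) le_rfl
          rw [dist_comm (c q)]
          exact add_lt_add (hbound n hn) this
      _ = ε := by ring
  obtain ⟨L, hL⟩ := cauchySeq_tendsto_of_complete hcauchy
  -- ‖L - c q‖ ≤ S q
  have hLc : ∀ q, ‖L - c q‖ ≤ S q := by
    intro q
    have h1 : Tendsto (fun k => ‖y (q + k + 1) - c q‖) atTop (nhds ‖L - c q‖) := by
      have hcomp : Tendsto (fun k : ℕ => q + k + 1) atTop atTop :=
        (tendsto_add_atTop_nat (q + 1)).congr fun k => by omega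
      exact ((hL.comp hcomp).sub tendsto_const_nhds).norm
    have h2 : Tendsto (fun k => S q + ‖iterComp T q k (y q) - c q‖) atTop
        (nhds (S q + 0)) := by
      have hz : Tendsto (fun k => ‖iterComp T q k (y q) - c q‖) atTop (nhds 0) := by
        have := ((hc q).sub (tendsto_const_nhds (x := c q))).norm
        simpa using this
      exact tendsto_const_nhds.add hz
    have hle : ∀ k, ‖y (q + k + 1) - c q‖ ≤ S q + ‖iterComp T q k (y q) - c q‖ := by
      intro k
      calc ‖y (q + k + 1) - c q‖ ≤ ‖y (q + k + 1) - iterComp T q k (y q)‖ +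
            ‖iterComp T q k (y q) - c q‖ := norm_sub_le_norm_sub_add_norm_sub _ _ _
        _ ≤ _ := by have := keyS q k; linarith
    have := le_of_tendsto_of_tendsto' h1 h2 hle
    simpa using this
  -- c q → L, so L ∈ C
  have hcL : Tendsto c atTop (nhds L) := by
    rw [tendsto_iff_norm_sub_tendsto_zero]
    have : Tendsto (fun q => S q) atTop (nhds 0) := hS0
    refine squeeze_zero (fun q => norm_nonneg _) (fun q => ?_) this
    rw [← norm_neg]; simpa [neg_sub] using hLc q
  exact ⟨L, hCc.mem_of_tendsto hcL (Eventually.of_forall hcC), hL⟩
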